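/- Let n ≥ 2, let T be the complete n-ary tree of height h ≥ 2, and let r be a positive integer with 1 ≤ r ≤ 2h − 1. Then the curling number of the r-th power T^r equals n^h. -/

import Mathlib

open Finset

/-- The degree of a vertex `v` in a simple graph `G`: the number of its neighbours. -/
noncomputable def gdeg {V : Type*} (G : SimpleGraph V) (v : V) : ℕ :=
  (G.neighborSet v).ncard

/-- The curling number of a finite simple graph: the maximum number of vertices
of `G` sharing a common degree. -/
noncomputable def curlingNumber {V : Type*} [Fintype V] (G : SimpleGraph V) : ℕ :=
  Finset.univ.sup fun v => (Finset.univ.filter fun u => gdeg G u = gdeg G v).card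

/-- The `r`-th power of a simple graph `G`: same vertex set, two distinct vertices
adjacent iff their distance in `G` is (finite and) at most `r`. -/
def SimpleGraph.power {V : Type*} (G : SimpleGraph V) (r : ℕ) : SimpleGraph V where
  Adj u v := u ≠ v ∧ G.Reachable u v ∧ G.dist u v ≤ r
  symm := ⟨by
    rintro u v ⟨h1, h2, h3⟩
    exact ⟨h1.symm, h2.symm, by rwa [SimpleGraph.dist_comm]⟩⟩
  loopless := ⟨by
    rintro v ⟨h1, -, -⟩
    exact h1 rfl⟩

/-- The complete `n`-ary tree of height `h`: the vertices at depth `i` (`0 ≤ i ≤ h`) are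
indexed by `Fin (n ^ i)`, and vertex `k` at depth `i + 1` is a child of vertex `k / n`
at depth `i`. -/
def completeNaryTree (n h : ℕ) : SimpleGraph (Σ i : Fin (h + 1), Fin (n ^ (i : ℕ))) where
  Adj u v :=
    ((u.1 : ℕ) + 1 = (v.1 : ℕ) ∧ (v.2 : ℕ) / n = (u.2 : ℕ)) ∨
    ((v.1 : ℕ) + 1 = (u.1 : ℕ) ∧ (u.2 : ℕ) / n = (v.2 : ℕ))
  symm := ⟨fun u v h => h.symm⟩
  loopless := ⟨fun u h => by rcases h with ⟨h1, -⟩ | ⟨h1, -⟩ <;> omega⟩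

/-!
In the tree, `dist u v ≤ r` holds exactly when `u` and `v` have the same ancestor at depth
`⌈(depth u + depth v - r) / 2⌉`. Hence the `r`-ball around a vertex of depth `i` meets depth `j`
in `n ^ e` vertices for an exponent `e` depending only on `i`, `j`, `r`, and the degree of a vertex
in `T^r` depends only on its depth. Comparing these level counts level by level (after shifting
the levels by `h - i - r` when the ball around a depth-`i` vertex does not reach the leaves)
shows that for `1 ≤ r ≤ 2h - 1` the `n ^ h` leaves have strictly smaller degree than all other
vertices. The other vertices number `1 + n + ⋯ + n ^ (h - 1) < n ^ h`, so no degree class is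
larger.
-/

open SimpleGraph

theorem SimpleGraph.power_adj_iff_edist {V : Type*} (G : SimpleGraph V) (r : ℕ) (u v : V) :
    (G.power r).Adj u v ↔ u ≠ v ∧ G.edist u v ≤ r := by
  refine and_congr_right fun _ => ⟨fun ⟨hreach, hdist⟩ => ?_, fun hle => ?_⟩
  · rw [← hreach.coe_dist_eq_edist]
    exact_mod_cast hdist
  · have hreach : G.Reachable u v :=
      edist_ne_top_iff_reachable.mp (ne_top_of_le_ne_top (ENat.natCast_ne_top r) hle)
    refine ⟨hreach, ?_⟩
    rw [← hreach.coe_dist_eq_edist] at hle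
    exact_mod_cast hle

theorem gdeg_power_add_one {V : Type*} [Fintype V] (G : SimpleGraph V) (r : ℕ) (v : V) :
    gdeg (G.power r) v + 1 = #{w | G.edist v w ≤ r} := by
  classical
  have hball : (G.power r).neighborSet v = ↑(({w | G.edist v w ≤ r} : Finset V).erase v) := by
    ext w
    simp [G.power_adj_iff_edist, and_comm, eq_comm]
  rw [gdeg, hball, Set.ncard_coe_finset, card_erase_add_one]
  simp

theorem curlingNumber_eq_card_of_gdeg_eq_iff {V : Type*} [Fintype V] (G : SimpleGraph V)
    (S : Finset V) (hS : ∀ u ∈ S, ∀ v, gdeg G v = gdeg G u ↔ v ∈ S)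
    (hcard : Fintype.card V < 2 * #S) : curlingNumber G = #S := by
  classical
  have hclass : ∀ u ∈ S, ({v | gdeg G v = gdeg G u} : Finset V) = S := fun u hu => by
    ext v
    simp [hS u hu v]
  apply le_antisymm
  · refine Finset.sup_le fun v _ => ?_
    by_cases hv : v ∈ S
    · rw [hclass v hv]
    · have hdisj : Disjoint ({u | gdeg G u = gdeg G v} : Finset V) S :=
        disjoint_left.mpr fun u hu huS => hv <| (hS u huS v).mp (mem_filter.mp hu).2.symm
      have := card_union_of_disjoint hdisj ▸ card_le_univ (_ ∪ S)
      omega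
  · obtain ⟨v, hv⟩ : S.Nonempty := card_pos.mp (by omega)
    exact hclass v hv ▸ le_sup (f := fun v => #{u | gdeg G u = gdeg G v}) (mem_univ v)

theorem Fin.card_filter_val_div_eq {N M c : ℕ} (hM : 0 < M) (hc : (c + 1) * M ≤ N) :
    #{y : Fin N | (y : ℕ) / M = c} = M := by
  rw [card_filter, Fin.sum_univ_eq_sum_range (fun y => if y / M = c then 1 else 0), ← card_filter]
  have : {y ∈ range N | y / M = c} = Ico (c * M) (c * M + M) := by
    have : (c + 1) * M = c * M + M := by ring
    ext y
    simp only [mem_filter, mem_range, mem_Ico, Nat.div_eq_iff hM]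
    omega
  rw [this, Nat.card_Ico]
  omega

namespace CompleteNaryTree

abbrev Vertex (n h : ℕ) := Σ i : Fin (h + 1), Fin (n ^ (i : ℕ))

variable {n h : ℕ}

theorem Vertex.ext {u v : Vertex n h} (hdepth : (u.1 : ℕ) = v.1) (hidx : (u.2 : ℕ) = v.2) :
    u = v := by
  obtain ⟨⟨i, hi⟩, ⟨x, hx⟩⟩ := u
  obtain ⟨⟨j, hj⟩, ⟨y, hy⟩⟩ := v
  simp only at hdepth hidx
  subst hdepth hidx
  rfl

-- The index of the depth-`k` ancestor of `u` among the vertices of depth `k`, for `k ≤ u.1`.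
def ancestorIndex (u : Vertex n h) (k : ℕ) : ℕ := u.2 / n ^ ((u.1 : ℕ) - k)

theorem ancestorIndex_of_depth_eq {u : Vertex n h} {k : ℕ} (hu : (u.1 : ℕ) = k) :
    ancestorIndex u k = u.2 := by
  simp [ancestorIndex, hu]

theorem ancestorIndex_div_pow (u : Vertex n h) {k k' : ℕ} (hk' : k' ≤ k) (hk : k ≤ u.1) :
    ancestorIndex u k / n ^ (k - k') = ancestorIndex u k' := by
  rw [ancestorIndex, ancestorIndex, Nat.div_div_eq_div_mul, ← pow_add]
  congr 2
  omega

theorem ancestorIndex_child {p c : Vertex n h} (hdepth : (p.1 : ℕ) + 1 = c.1)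
    (hidx : (c.2 : ℕ) / n = p.2) {k : ℕ} (hk : k ≤ p.1) :
    ancestorIndex c k = ancestorIndex p k := by
  rw [ancestorIndex, ancestorIndex, ← hidx, Nat.div_div_eq_div_mul, ← pow_succ']
  congr 2
  omega

theorem exists_parent (hn : 0 < n) (c : Vertex n h) (hc : 0 < (c.1 : ℕ)) :
    ∃ p : Vertex n h, (completeNaryTree n h).Adj p c ∧ (p.1 : ℕ) + 1 = c.1 ∧
      (c.2 : ℕ) / n = p.2 := by
  have hidx : (c.2 : ℕ) / n < n ^ ((c.1 : ℕ) - 1) := by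
    rw [Nat.div_lt_iff_lt_mul hn, ← pow_succ, Nat.sub_add_cancel hc]
    exact c.2.isLt
  refine ⟨⟨⟨c.1 - 1, by omega⟩, ⟨c.2 / n, hidx⟩⟩, Or.inl ⟨?_, rfl⟩, ?_, rfl⟩ <;>
    simp only <;> omega

def CommonAncestorAt (u v : Vertex n h) (k : ℕ) : Prop :=
  k ≤ u.1 ∧ k ≤ v.1 ∧ ancestorIndex u k = ancestorIndex v k

theorem CommonAncestorAt.symm {u v : Vertex n h} {k : ℕ} (huv : CommonAncestorAt u v k) :
    CommonAncestorAt v u k :=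
  ⟨huv.2.1, huv.1, huv.2.2.symm⟩

theorem CommonAncestorAt.mono {u v : Vertex n h} {k k' : ℕ} (huv : CommonAncestorAt u v k)
    (hk' : k' ≤ k) : CommonAncestorAt u v k' := by
  obtain ⟨hu, hv, hidx⟩ := huv
  refine ⟨by omega, by omega, ?_⟩
  rw [← ancestorIndex_div_pow u hk' hu, ← ancestorIndex_div_pow v hk' hv, hidx]

theorem CommonAncestorAt.eq {u v : Vertex n h} {k : ℕ} (huv : CommonAncestorAt u v k)
    (hu : (u.1 : ℕ) = k) (hv : (v.1 : ℕ) = k) : u = v := by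
  have hidx := huv.2.2
  rw [ancestorIndex_of_depth_eq hu, ancestorIndex_of_depth_eq hv] at hidx
  exact Vertex.ext (hu.trans hv.symm) hidx

theorem edist_le_of_commonAncestorAt (hn : 0 < n) {u v : Vertex n h} {k : ℕ}
    (huv : CommonAncestorAt u v k) :
    (completeNaryTree n h).edist u v ≤ ((u.1 : ℕ) + v.1 - 2 * k : ℕ) := by
  suffices ∀ d (u v : Vertex n h), (u.1 : ℕ) + v.1 = d + 2 * k → CommonAncestorAt u v k →
      (completeNaryTree n h).edist u v ≤ d from
    this _ u v (by have := huv.1; have := huv.2.1; omega) huv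
  intro d
  induction d with
  | zero =>
    intro u v hd huv
    have := huv.1
    have := huv.2.1
    rw [huv.eq (by omega) (by omega), SimpleGraph.edist_self]
    exact le_rfl
  | succ d ih =>
    intro u v hd huv
    wlog hu : k < u.1 generalizing u v
    · rw [SimpleGraph.edist_comm]
      exact this v u (by omega) huv.symm (by have := huv.1; omega)
    obtain ⟨p, hpu, hdepth, hidx⟩ := exists_parent hn u (by omega)
    have hpv : CommonAncestorAt p v k :=
      ⟨by omega, huv.2.1, (ancestorIndex_child hdepth hidx (by omega)).symm.trans huv.2.2⟩
    calc (completeNaryTree n h).edist u v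
        ≤ (completeNaryTree n h).edist u p + (completeNaryTree n h).edist p v :=
          SimpleGraph.edist_triangle
      _ ≤ 1 + d := add_le_add (edist_eq_one_iff_adj.mpr hpu.symm).le (ih p v (by omega) hpv)
      _ = (d + 1 : ℕ) := by push_cast; ring

theorem exists_commonAncestorAt_of_adj {a b v : Vertex n h}
    (hab : (completeNaryTree n h).Adj a b) {k m : ℕ} (hbv : CommonAncestorAt b v k)
    (hm : (b.1 : ℕ) + v.1 ≤ m + 2 * k) :
    ∃ k', CommonAncestorAt a v k' ∧ (a.1 : ℕ) + v.1 ≤ m + 1 + 2 * k' := by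
  obtain ⟨hkb, hkv, hidx⟩ := hbv
  rcases hab with ⟨hdepth, hchild⟩ | ⟨hdepth, hchild⟩
  · by_cases hk : k ≤ a.1
    · exact ⟨k, ⟨hk, hkv, (ancestorIndex_child hdepth hchild hk).symm.trans hidx⟩,
        by omega⟩
    · -- the common ancestor was `b` itself, so its parent `a` is one at depth `k - 1`
      refine ⟨a.1, ⟨le_rfl, by omega, ?_⟩, by omega⟩
      rw [ancestorIndex_of_depth_eq rfl, ← hchild,
        ← ancestorIndex_div_pow v (k := k) (by omega) hkv, ← hidx,
        ancestorIndex_of_depth_eq (by omega), show k - a.1 = 1 by omega, pow_one]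
  · exact ⟨k, ⟨by omega, hkv, (ancestorIndex_child hdepth hchild (by omega)).trans hidx⟩,
      by omega⟩

theorem exists_commonAncestorAt_of_walk {u v : Vertex n h}
    (p : (completeNaryTree n h).Walk u v) :
    ∃ k, CommonAncestorAt u v k ∧ (u.1 : ℕ) + v.1 ≤ p.length + 2 * k := by
  induction p with
  | nil => exact ⟨_, ⟨le_rfl, le_rfl, rfl⟩, by omega⟩
  | cons hab q ih =>
    obtain ⟨k, hk, hlen⟩ := ih
    rw [Walk.length_cons]
    exact exists_commonAncestorAt_of_adj hab hk hlen

theorem edist_le_iff_commonAncestorAt (hn : 0 < n) (u v : Vertex n h) (r : ℕ) :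
    (completeNaryTree n h).edist u v ≤ r ↔
      CommonAncestorAt u v (((u.1 : ℕ) + v.1 + 1 - r) / 2) := by
  constructor
  · intro hle
    have hreach := edist_ne_top_iff_reachable.mp (ne_top_of_le_ne_top (ENat.natCast_ne_top r) hle)
    obtain ⟨p, hp⟩ := hreach.exists_walk_length_eq_edist
    obtain ⟨k, hk, hlen⟩ := exists_commonAncestorAt_of_walk p
    have : p.length ≤ r := by exact_mod_cast hp ▸ hle
    exact hk.mono (by omega)
  · intro huv
    refine (edist_le_of_commonAncestorAt hn huv).trans ?_
    exact_mod_cast (by omega)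

-- `(i + j + 1 - r) / 2 = ⌈(i + j - r) / 2⌉` is the depth down to which a vertex of depth `j`
-- within distance `r` of a vertex of depth `i` must share its ancestors.
def levelBallCard (n r i j : ℕ) : ℕ :=
  if (i + j + 1 - r) / 2 ≤ min i j then n ^ (j - (i + j + 1 - r) / 2) else 0

def ballCard (n h r i : ℕ) : ℕ := ∑ j ∈ range (h + 1), levelBallCard n r i j

theorem card_level_edist_le (hn : 0 < n) (u : Vertex n h) (r : ℕ) (j : Fin (h + 1)) :
    #{y : Fin (n ^ (j : ℕ)) | (completeNaryTree n h).edist u ⟨j, y⟩ ≤ r}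
      = levelBallCard n r u.1 j := by
  simp only [edist_le_iff_commonAncestorAt hn, CommonAncestorAt]
  set k := ((u.1 : ℕ) + j + 1 - r) / 2
  unfold levelBallCard
  split_ifs with hk
  · have hidx : ancestorIndex u k < n ^ k := by
      rw [ancestorIndex, Nat.div_lt_iff_lt_mul (by positivity), ← pow_add,
        Nat.add_sub_cancel' (by omega)]
      exact u.2.isLt
    rw [← Fin.card_filter_val_div_eq (N := n ^ (j : ℕ)) (M := n ^ ((j : ℕ) - k))
      (c := ancestorIndex u k) (by positivity) ?_]
    · refine congrArg card (filter_congr fun y _ => ?_)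
      rw [ancestorIndex, eq_comm, ← and_assoc]
      exact and_iff_right ⟨by omega, by omega⟩
    · calc (ancestorIndex u k + 1) * n ^ ((j : ℕ) - k) ≤ n ^ k * n ^ ((j : ℕ) - k) := by
            gcongr; omega
        _ = n ^ (j : ℕ) := by rw [← pow_add, Nat.add_sub_cancel' (by omega)]
  · rw [card_eq_zero, filter_eq_empty_iff]
    intro y _ hy
    omega

theorem gdeg_power_add_one_eq_ballCard (hn : 0 < n) (r : ℕ) (u : Vertex n h) :
    gdeg ((completeNaryTree n h).power r) u + 1 = ballCard n h r u.1 := by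
  rw [gdeg_power_add_one, card_filter, ← univ_sigma_univ, sum_sigma, ballCard,
    ← Fin.sum_univ_eq_sum_range]
  refine sum_congr rfl fun j _ => ?_
  rw [← card_filter, card_level_edist_le hn]

theorem levelBallCard_eq_pow {r i j : ℕ} (hij : (i + j + 1 - r) / 2 ≤ min i j) :
    levelBallCard n r i j = n ^ (j - (i + j + 1 - r) / 2) :=
  if_pos hij

theorem levelBallCard_eq_zero {r i j : ℕ} (hij : j + r < i) : levelBallCard n r i j = 0 :=
  if_neg (by omega)

theorem levelBallCard_leaf_shift_le {r i j : ℕ} (hn : 0 < n) (hi : i < h)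
    (hj : h - i - r + j ≤ h) :
    levelBallCard n r h (h - i - r + j) ≤ levelBallCard n r i j := by
  unfold levelBallCard
  split_ifs with hleaf hinner
  · exact Nat.pow_le_pow_right hn (by omega)
  · omega
  · exact Nat.zero_le _
  · exact le_rfl

theorem exists_levelBallCard_leaf_shift_lt {r i : ℕ} (hn : 2 ≤ n) (hr1 : 1 ≤ r)
    (hr2 : r ≤ 2 * h - 1) (hi : i < h) :
    ∃ j, h - i - r + j ≤ h ∧ levelBallCard n r h (h - i - r + j) < levelBallCard n r i j := by
  obtain ⟨j, hj, hleaf, hinner, hexp⟩ : ∃ j, h - i - r + j ≤ h ∧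
      (h + (h - i - r + j) + 1 - r) / 2 ≤ min h (h - i - r + j) ∧
      (i + j + 1 - r) / 2 ≤ min i j ∧
      h - i - r + j - (h + (h - i - r + j) + 1 - r) / 2 < j - (i + j + 1 - r) / 2 := by
    -- If the ball around depth `i` misses the leaves, compare at leaf level `h - r + 1`, where the
    -- leaf sees a single vertex; otherwise at the level `h` or `h - 1` where `h + j - r` is odd.
    by_cases hfar : r < h - i
    · exact ⟨i + 1, by omega⟩
    · exact ⟨h - (r + 1) % 2, by omega⟩
  refine ⟨j, hj, ?_⟩
  rw [levelBallCard_eq_pow hleaf, levelBallCard_eq_pow hinner]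
  exact Nat.pow_lt_pow_right hn hexp

theorem ballCard_leaf_lt {r i : ℕ} (hn : 2 ≤ n) (hr1 : 1 ≤ r) (hr2 : r ≤ 2 * h - 1)
    (hi : i < h) :
    ballCard n h r h < ballCard n h r i := by
  obtain ⟨j₀, hj₀, hlt⟩ := exists_levelBallCard_leaf_shift_lt hn hr1 hr2 hi
  calc ballCard n h r h
      = ∑ j ∈ range (h + 1 - (h - i - r)), levelBallCard n r h (h - i - r + j) := by
        rw [ballCard, ← Nat.add_sub_cancel' (show h - i - r ≤ h + 1 by omega), sum_range_add,
          sum_eq_zero fun j hj => levelBallCard_eq_zero (by rw [mem_range] at hj; omega),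
          zero_add, Nat.add_sub_cancel_left]
    _ < ∑ j ∈ range (h + 1 - (h - i - r)), levelBallCard n r i j :=
        sum_lt_sum
          (fun j hj => levelBallCard_leaf_shift_le (by omega) hi (by rw [mem_range] at hj; omega))
          ⟨j₀, mem_range.mpr (by omega), hlt⟩
    _ ≤ ballCard n h r i := sum_le_sum_of_subset (range_subset_range.mpr (Nat.sub_le _ _))

variable (n h) in
theorem card_vertex : Fintype.card (Vertex n h) = ∑ i ∈ range (h + 1), n ^ i := by
  simp [Fintype.card_sigma, Fin.sum_univ_eq_sum_range (fun i => n ^ i)]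

variable (n h) in
theorem card_leaves : #{u : Vertex n h | (u.1 : ℕ) = h} = n ^ h := by
  rw [card_filter, ← univ_sigma_univ, sum_sigma, sum_eq_single (Fin.last h)]
  · simp
  · intro i _ hi
    simp only [ne_eq, Fin.ext_iff, Fin.val_last] at hi
    simp [hi]
  · simp

end CompleteNaryTree

theorem curlingNumber_completeNaryTree_power_general (n h r : ℕ) (hn : 2 ≤ n)
    (hr1 : 1 ≤ r) (hr2 : r ≤ 2 * h - 1) :
    curlingNumber ((completeNaryTree n h).power r) = n ^ h := by
  have hdeg := CompleteNaryTree.gdeg_power_add_one_eq_ballCard (n := n) (h := h) (by omega) r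
  rw [← CompleteNaryTree.card_leaves n h]
  refine curlingNumber_eq_card_of_gdeg_eq_iff _ _ (fun u hu v => ?_) ?_
  · rw [← Nat.add_right_cancel_iff (n := 1), hdeg, hdeg, (mem_filter.mp hu).2, mem_filter]
    refine ⟨fun hball => ⟨mem_univ v, ?_⟩, fun ⟨_, hleaf⟩ => by rw [hleaf]⟩
    by_contra hne
    exact (CompleteNaryTree.ballCard_leaf_lt hn hr1 hr2 (by omega)).ne hball.symm
  · rw [CompleteNaryTree.card_vertex, CompleteNaryTree.card_leaves, sum_range_succ]
    have := Nat.geomSum_lt hn (s := range h) (fun k hk => mem_range.mp hk)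
    omega

/-- For `n ≥ 2`, the complete `n`-ary tree `T` of height `h ≥ 2`, and
`1 ≤ r ≤ 2h - 1`, the curling number of the `r`-th power `T^r` is `n ^ h`. -/
theorem curlingNumber_completeNaryTree_power (n h r : ℕ) (hn : 2 ≤ n) (hh : 2 ≤ h)
    (hr1 : 1 ≤ r) (hr2 : r ≤ 2 * h - 1) :
    curlingNumber ((completeNaryTree n h).power r) = n ^ h :=
  curlingNumber_completeNaryTree_power_general n h r hn hr1 hr2
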